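/- For the spin-1 Fourier-basis state v = (1/√3)(1,1,1) (i.e., (|1,1⟩+|1,0⟩+|1,−1⟩)/√3), the maximum of its Husimi function over the sphere equals (3 + 2√2)/6. -/

import Mathlib

open Real Complex

/-!
The amplitude is the quadratic polynomial `c² + √2 c s z + s² z²` in `z = e^{-iφ}`, with
`c = cos (θ/2)` and `s = sin (θ/2)`. On the unit circle the triangle inequality bounds its
modulus by `c² + √2 |c s| + s² = 1 + |sin θ| / √2 ≤ 1 + 1/√2`, and all three terms are equal
positive reals at `θ = π/2`, `φ = 0`, so the bound is attained.
-/

/-- Husimi function of the spin-1 state (|1,1⟩+|1,0⟩+|1,−1⟩)/√3 at the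
coherent state labelled by (θ, φ). -/
noncomputable def husimiFourier (θ φ : ℝ) : ℝ :=
  (1 / 3) * ‖
    ((Real.cos (θ / 2) : ℂ) ^ 2 +
      (Real.sqrt 2 : ℂ) * Real.cos (θ / 2) * Real.sin (θ / 2) * Complex.exp (-Complex.I * φ) +
      (Real.sin (θ / 2) : ℂ) ^ 2 * Complex.exp (-2 * Complex.I * φ))‖ ^ 2

lemma norm_add_mul_add_mul_sq_le {a b c : ℂ} {z : ℂ} (hz : ‖z‖ ≤ 1) :
    ‖a + b * z + c * z ^ 2‖ ≤ ‖a‖ + ‖b‖ + ‖c‖ := by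
  have hz2 : ‖z ^ 2‖ ≤ 1 := by rw [norm_pow]; exact pow_le_one₀ (norm_nonneg z) hz
  calc ‖a + b * z + c * z ^ 2‖ ≤ ‖a‖ + ‖b * z‖ + ‖c * z ^ 2‖ := norm_add₃_le
    _ ≤ ‖a‖ + ‖b‖ + ‖c‖ := by
      gcongr
      · exact norm_mul_le_of_le le_rfl hz |>.trans_eq (mul_one _)
      · exact norm_mul_le_of_le le_rfl hz2 |>.trans_eq (mul_one _)

lemma abs_cos_mul_sin_le_half (x : ℝ) : |Real.cos x * Real.sin x| ≤ 1 / 2 := by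
  rw [abs_le]
  constructor <;> nlinarith [Real.sin_sq_add_cos_sq x, sq_nonneg (Real.cos x - Real.sin x),
    sq_nonneg (Real.cos x + Real.sin x)]

lemma husimiFourier_le (θ φ : ℝ) : husimiFourier θ φ ≤ (3 + 2 * √2) / 6 := by
  set c := Real.cos (θ / 2)
  set s := Real.sin (θ / 2)
  have hexp : Complex.exp (-2 * Complex.I * φ) = Complex.exp (-Complex.I * φ) ^ 2 := by
    rw [← Complex.exp_nat_mul]; push_cast; ring_nf
  have hz : ‖Complex.exp (-Complex.I * φ)‖ = 1 := by
    rw [Complex.norm_exp]; simp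
  have hamp : ‖(c : ℂ) ^ 2 + (√2 : ℂ) * c * s * Complex.exp (-Complex.I * φ) +
      (s : ℂ) ^ 2 * Complex.exp (-2 * Complex.I * φ)‖ ≤ 1 + √2 / 2 := by
    rw [hexp]
    refine (norm_add_mul_add_mul_sq_le hz.le).trans ?_
    have hcs := abs_cos_mul_sin_le_half (θ / 2)
    simp only [norm_pow, norm_mul, Complex.norm_real, Real.norm_eq_abs, sq_abs,
      abs_of_nonneg (sqrt_nonneg 2)]
    nlinarith [Real.sin_sq_add_cos_sq (θ / 2), abs_mul c s, sqrt_nonneg 2]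
  have h2 : √2 ^ 2 = 2 := sq_sqrt (by norm_num)
  calc husimiFourier θ φ ≤ 1 / 3 * (1 + √2 / 2) ^ 2 := by unfold husimiFourier; gcongr
    _ = (3 + 2 * √2) / 6 := by linear_combination h2 / 12

lemma husimiFourier_pi_div_two_zero : husimiFourier (π / 2) 0 = (3 + 2 * √2) / 6 := by
  have hc : Real.cos (π / 2 / 2) = √2 / 2 := by rw [div_div, show (2 : ℝ) * 2 = 4 by norm_num,
    Real.cos_pi_div_four]
  have hs : Real.sin (π / 2 / 2) = √2 / 2 := by rw [div_div, show (2 : ℝ) * 2 = 4 by norm_num,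
    Real.sin_pi_div_four]
  have hamp : ((√2 / 2 : ℝ) : ℂ) ^ 2 + (√2 : ℂ) * ((√2 / 2 : ℝ) : ℂ) * ((√2 / 2 : ℝ) : ℂ) +
      ((√2 / 2 : ℝ) : ℂ) ^ 2 = ((1 + √2 / 2 : ℝ) : ℂ) := by
    have h2 : (√2 : ℂ) ^ 2 = 2 := by norm_cast; exact sq_sqrt (by norm_num)
    push_cast
    linear_combination (1 / 2 + (√2 : ℂ) / 4) * h2
  rw [husimiFourier, hc, hs]
  simp only [Complex.ofReal_zero, mul_zero, Complex.exp_zero, mul_one]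
  rw [hamp, Complex.norm_real, Real.norm_of_nonneg (by positivity)]
  linear_combination sq_sqrt (show (0 : ℝ) ≤ 2 by norm_num) / 12

/-- The maximum of the Husimi function of the spin-1 Fourier-basis state
(1/√3)(1,1,1) over the sphere equals (3 + 2√2)/6, attained at θ = π/2, φ = 0. -/
theorem husimi_max_fourier_state :
    IsGreatest
      {x : ℝ | ∃ θ ∈ Set.Icc (0 : ℝ) π, ∃ φ ∈ Set.Icc (0 : ℝ) (2 * π),
        x = husimiFourier θ φ}
      ((3 + 2 * Real.sqrt 2) / 6) := by
  refine ⟨⟨π / 2, ⟨by positivity, by linarith [pi_pos]⟩, 0, ⟨le_rfl, by positivity⟩,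
    husimiFourier_pi_div_two_zero.symm⟩, ?_⟩
  rintro _ ⟨θ, -, φ, -, rfl⟩
  exact husimiFourier_le θ φ
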